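/- Let p ∈ [2,∞), let Q₀ ∈ 𝒟, and let f : ℝ^n × (0,∞) → [0,∞) be σ×η-measurable with ∬_{Q̂₀} f μ dη dσ < ∞. Let 𝓕 be the stopping family for f with top cube Q₀ and parameter A = 4^{2/p'}. Then for every F ∈ 𝓕 one has ∑_{F'∈𝓕, F'⊆F} ‖φ_{F'}‖_{L^p(σ;ℓ²)}^p ≤ 2 ‖φ_F‖_{L^p(σ;ℓ²)}^p. -/

import Mathlib

open MeasureTheory ENNReal Set
open scoped Classical NNReal ENNReal

noncomputable section

/-- The index of a dyadic cube `2^{-k}([0,1)^n + m)` of the standard dyadic lattice `𝒟`. -/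
abbrev CubeIdx (n : ℕ) := ℤ × (Fin n → ℤ)

/-- The dyadic cube `2^{-k}([0,1)^n + m)`. -/
def dyadicCube (n : ℕ) (k : ℤ) (m : Fin n → ℤ) : Set (Fin n → ℝ) :=
  {x | ∀ i, x i ∈ Set.Ico ((2:ℝ) ^ (-k) * (m i : ℝ)) ((2:ℝ) ^ (-k) * ((m i : ℝ) + 1))}

/-- The dyadic cube associated to an index. -/
def idxCube (n : ℕ) (Q : CubeIdx n) : Set (Fin n → ℝ) := dyadicCube n Q.1 Q.2

/-- The Carleson box `Q̂ = Q × (0, ℓ(Q)]`, where `ℓ(Q) = 2^{-k}`. -/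
def carlesonBox (n : ℕ) (k : ℤ) (m : Fin n → ℤ) : Set ((Fin n → ℝ) × ℝ) :=
  (dyadicCube n k m) ×ˢ (Set.Ioc (0:ℝ) ((2:ℝ) ^ (-k)))

/-- The vertical `ℓ²`-norm `|f|_{ℓ²}(x) = (∑_{k ∈ ℤ} f(x, 2^{-k})²)^{1/2}`. -/
def vertL2 (n : ℕ) (f : (Fin n → ℝ) × ℝ → ℝ≥0∞) (x : Fin n → ℝ) : ℝ≥0∞ :=
  (∑' k : ℤ, (f (x, (2:ℝ) ^ (-k))) ^ 2) ^ (1/2 : ℝ)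

/-- The mixed norm `‖f‖_{L^q(σ; ℓ²)} = (∫ |f|_{ℓ²}^q dσ)^{1/q}`. -/
def mixedNorm (n : ℕ) (σ : Measure (Fin n → ℝ)) (q : ℝ)
    (f : (Fin n → ℝ) × ℝ → ℝ≥0∞) : ℝ≥0∞ :=
  (∫⁻ x, (vertL2 n f x) ^ q ∂σ) ^ (1/q)

/-- The norm `‖g‖_{L^q(ω)} = (∫ g^q dω)^{1/q}` of a nonnegative function. -/
def lpNorm (n : ℕ) (ω : Measure (Fin n → ℝ)) (q : ℝ) (g : (Fin n → ℝ) → ℝ≥0∞) : ℝ≥0∞ :=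
  (∫⁻ x, (g x) ^ q ∂ω) ^ (1/q)

/-- `∬_{Q̂} f μ dη dσ = ∑_{j ∈ ℤ, 2^j ≤ ℓ(Q)} ∫_Q f(x, 2^j) μ(x, 2^j) dσ(x)`. -/
def boxInt (n : ℕ) (σ : Measure (Fin n → ℝ)) (μ : (Fin n → ℝ) × ℝ → ℝ≥0∞)
    (f : (Fin n → ℝ) × ℝ → ℝ≥0∞) (k : ℤ) (m : Fin n → ℤ) : ℝ≥0∞ :=
  ∑' j : ℤ, if (2:ℝ) ^ j ≤ (2:ℝ) ^ (-k) then
      ∫⁻ x in dyadicCube n k m, f (x, (2:ℝ) ^ j) * μ (x, (2:ℝ) ^ j) ∂σ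
    else 0

/-- `1_{Q̂} μ`. -/
def boxFn (n : ℕ) (μ : (Fin n → ℝ) × ℝ → ℝ≥0∞) (k : ℤ) (m : Fin n → ℤ) :
    (Fin n → ℝ) × ℝ → ℝ≥0∞ :=
  (carlesonBox n k m).indicator μ

/-- The test function `φ_Q = |1_{Q̂} μ|_{ℓ²}^{p'-2} 1_{Q̂} μ`,
interpreted as `0` where `|1_{Q̂} μ|_{ℓ²} = 0`. -/
def testFn (n : ℕ) (p' : ℝ) (μ : (Fin n → ℝ) × ℝ → ℝ≥0∞) (k : ℤ) (m : Fin n → ℤ) :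
    (Fin n → ℝ) × ℝ → ℝ≥0∞ :=
  fun z => if vertL2 n (boxFn n μ k m) z.1 = 0 then 0
    else (vertL2 n (boxFn n μ k m) z.1) ^ (p' - 2) * boxFn n μ k m z

/-- The bilinear form `Λ(f,g) = ∑_{Q ∈ 𝒟} λ_Q (∬_{Q̂} f μ dη dσ) (∫_Q g dω)`. -/
def lambdaForm (n : ℕ) (σ ω : Measure (Fin n → ℝ)) (μ : (Fin n → ℝ) × ℝ → ℝ≥0∞)
    (lam : CubeIdx n → ℝ≥0) (f : (Fin n → ℝ) × ℝ → ℝ≥0∞) (g : (Fin n → ℝ) → ℝ≥0∞) :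
    ℝ≥0∞ :=
  ∑' Q : CubeIdx n,
    (lam Q : ℝ≥0∞) * boxInt n σ μ f Q.1 Q.2 * ∫⁻ x in idxCube n Q, g x ∂ω

/-- The localized bilinear form `Λ_{Q₀}(f,g)`, where the sum is restricted to
dyadic cubes `Q ⊆ Q₀`. -/
def lambdaLoc (n : ℕ) (σ ω : Measure (Fin n → ℝ)) (μ : (Fin n → ℝ) × ℝ → ℝ≥0∞)
    (lam : CubeIdx n → ℝ≥0) (Q₀ : CubeIdx n)
    (f : (Fin n → ℝ) × ℝ → ℝ≥0∞) (g : (Fin n → ℝ) → ℝ≥0∞) : ℝ≥0∞ :=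
  ∑' Q : CubeIdx n, if idxCube n Q ⊆ idxCube n Q₀ then
      (lam Q : ℝ≥0∞) * boxInt n σ μ f Q.1 Q.2 * ∫⁻ x in idxCube n Q, g x ∂ω
    else 0

/-- The average `⟨h⟩_Q^ν = ν(Q)⁻¹ ∫_Q h dν`, understood as `0` when `ν(Q) = 0`. -/
def cubeAvg (n : ℕ) (ν : Measure (Fin n → ℝ)) (h : (Fin n → ℝ) → ℝ≥0∞)
    (k : ℤ) (m : Fin n → ℤ) : ℝ≥0∞ :=
  (∫⁻ x in dyadicCube n k m, h x ∂ν) / ν (dyadicCube n k m)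


/-- `Q ∈ ch_𝓕(F)`: a maximal dyadic cube `Q ⊆ F` with
`(∬_{Q̂} f μ)(∬_{F̂} φ_F μ) > A (∬_{F̂} f μ)(∬_{Q̂} φ_F μ)`. -/
def fStopChild (n : ℕ) (σ : Measure (Fin n → ℝ)) (μ f : (Fin n → ℝ) × ℝ → ℝ≥0∞)
    (p' : ℝ) (A : ℝ≥0∞) (F Q : CubeIdx n) : Prop :=
  idxCube n Q ⊆ idxCube n F ∧
  A * (boxInt n σ μ f F.1 F.2 * boxInt n σ μ (testFn n p' μ F.1 F.2) Q.1 Q.2)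
    < boxInt n σ μ f Q.1 Q.2 * boxInt n σ μ (testFn n p' μ F.1 F.2) F.1 F.2 ∧
  ∀ Q' : CubeIdx n, idxCube n Q ⊂ idxCube n Q' → idxCube n Q' ⊆ idxCube n F →
    ¬ (A * (boxInt n σ μ f F.1 F.2 * boxInt n σ μ (testFn n p' μ F.1 F.2) Q'.1 Q'.2)
        < boxInt n σ μ f Q'.1 Q'.2 * boxInt n σ μ (testFn n p' μ F.1 F.2) F.1 F.2)

/-- The stopping family `𝓕 = ⋃_{k≥0} 𝓕_k` for `f` with top cube `Q₀` and parameter `A`: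
the smallest family containing `Q₀` and closed under taking stopping children. -/
inductive fStop (n : ℕ) (σ : Measure (Fin n → ℝ)) (μ f : (Fin n → ℝ) × ℝ → ℝ≥0∞)
    (p' : ℝ) (A : ℝ≥0∞) (Q₀ : CubeIdx n) : CubeIdx n → Prop
  | top : fStop n σ μ f p' A Q₀ Q₀
  | child {F Q : CubeIdx n} : fStop n σ μ f p' A Q₀ F → fStopChild n σ μ f p' A F Q →
      fStop n σ μ f p' A Q₀ Q

/-!
Write `c(Q) = ∫ |1_{Q̂} μ|_{ℓ²}^{p'} dσ` (`boxMass`); since `(p' - 1) p = p'`, this is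
`‖φ_Q‖_{L^p(σ;ℓ²)}^p`. Let `Q` be a stopping child of `F` and `θ = p'/2 ≤ 1`. Pointwise the powers
of `|1_{F̂} μ|_{ℓ²}` cancel in
`|1_{Q̂} μ|^{p'} = (|1_{F̂} μ|^{p'-2} |1_{Q̂} μ|²)^θ (|1_{F̂} μ|^{p'})^{1-θ}`,
and the first factor integrates to `∬_{Q̂} φ_F μ`, so Hölder gives
`c(Q) ≤ (∬_{Q̂} φ_F μ)^θ (∫_Q |1_{F̂} μ|^{p'})^{1-θ}`. The children are disjoint, so the stopping
inequality summed over them gives `A ∑_Q ∬_{Q̂} φ_F μ ≤ ∬_{F̂} φ_F μ = c(F)`, and Hölder for sums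
yields `∑_Q c(Q) ≤ A^{-θ} c(F) = c(F) / 4`. By dyadic nesting, the members of `𝓕` inside `F` are
the iterated stopping children of `F`, so their total mass is at most `∑_m 4^{-m} c(F) ≤ 2 c(F)`.
-/

section DyadicGeometry

variable {n : ℕ}

lemma dyadicCube_eq_pi (k : ℤ) (m : Fin n → ℤ) :
    dyadicCube n k m =
      Set.univ.pi fun i => Ico ((2:ℝ) ^ (-k) * m i) ((2:ℝ) ^ (-k) * (m i + 1)) := by
  ext x
  simp [dyadicCube]

lemma measurableSet_dyadicCube (k : ℤ) (m : Fin n → ℤ) : MeasurableSet (dyadicCube n k m) := by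
  rw [dyadicCube_eq_pi]
  exact MeasurableSet.univ_pi fun _ => measurableSet_Ico

lemma volume_dyadicCube (k : ℤ) (m : Fin n → ℤ) :
    volume (dyadicCube n k m) = ENNReal.ofReal ((2:ℝ) ^ (-k)) ^ n := by
  rw [dyadicCube_eq_pi, Real.volume_pi_Ico]
  simp [mul_add]

lemma mem_dyadicCube_iff {k : ℤ} {m : Fin n → ℤ} {x : Fin n → ℝ} :
    x ∈ dyadicCube n k m ↔ ∀ i, ⌊(2:ℝ) ^ k * x i⌋ = m i := by
  have h : (0:ℝ) < 2 ^ k := zpow_pos two_pos k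
  simp only [dyadicCube, Set.mem_ofPred_eq, Set.mem_Ico, Int.floor_eq_iff, zpow_neg,
    inv_mul_le_iff₀ h, lt_inv_mul_iff₀ h]

lemma floor_zpow_mul_eq_of_le {k k' : ℤ} (hk : k' ≤ k) {a b : ℝ}
    (h : ⌊(2:ℝ) ^ k * a⌋ = ⌊(2:ℝ) ^ k * b⌋) : ⌊(2:ℝ) ^ k' * a⌋ = ⌊(2:ℝ) ^ k' * b⌋ := by
  obtain ⟨d, rfl⟩ : ∃ d : ℕ, k = k' + d := ⟨(k - k').toNat, by omega⟩
  have hscale (c : ℝ) : (2:ℝ) ^ k' * c = (2:ℝ) ^ (k' + d) * c / ((2 ^ d : ℕ) : ℝ) := by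
    rw [zpow_add₀ two_ne_zero]
    push_cast
    field_simp
    norm_cast
  rw [hscale a, hscale b, Int.floor_div_natCast, Int.floor_div_natCast, h]

lemma dyadicCube_subset_of_mem {k k' : ℤ} {m m' : Fin n → ℤ} (hk : k' ≤ k) {x : Fin n → ℝ}
    (hx : x ∈ dyadicCube n k m) (hx' : x ∈ dyadicCube n k' m') :
    dyadicCube n k m ⊆ dyadicCube n k' m' := by
  intro y hy
  rw [mem_dyadicCube_iff] at hx hx' hy ⊢
  intro i
  rw [← hx' i]
  exact floor_zpow_mul_eq_of_le hk ((hy i).trans (hx i).symm)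

lemma floor_zpow_mul_zpow_neg_mul (k z : ℤ) : ⌊(2:ℝ) ^ k * ((2:ℝ) ^ (-k) * z)⌋ = z := by
  rw [← mul_assoc, ← zpow_add₀ two_ne_zero, add_neg_cancel, zpow_zero, one_mul, Int.floor_intCast]

lemma corner_mem_dyadicCube (k : ℤ) (m : Fin n → ℤ) :
    (fun i => (2:ℝ) ^ (-k) * m i) ∈ dyadicCube n k m := by
  rw [mem_dyadicCube_iff]
  intro i
  exact floor_zpow_mul_zpow_neg_mul k (m i)

lemma idxCube_nonempty (Q : CubeIdx n) : (idxCube n Q).Nonempty :=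
  ⟨_, corner_mem_dyadicCube Q.1 Q.2⟩

lemma idxCube_subset_or_subset {P Q : CubeIdx n} (h : (idxCube n P ∩ idxCube n Q).Nonempty) :
    idxCube n P ⊆ idxCube n Q ∨ idxCube n Q ⊆ idxCube n P := by
  obtain ⟨x, hxP, hxQ⟩ := h
  rcases le_total Q.1 P.1 with hk | hk
  · exact Or.inl (dyadicCube_subset_of_mem hk hxP hxQ)
  · exact Or.inr (dyadicCube_subset_of_mem hk hxQ hxP)

lemma zpow_neg_le_of_idxCube_subset (hn : 0 < n) {P Q : CubeIdx n}
    (h : idxCube n P ⊆ idxCube n Q) : (2:ℝ) ^ (-P.1) ≤ (2:ℝ) ^ (-Q.1) := by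
  have hvol := measure_mono (μ := volume) h
  rw [idxCube, idxCube, volume_dyadicCube, volume_dyadicCube,
    ENNReal.pow_le_pow_left_iff hn.ne',
    ENNReal.ofReal_le_ofReal_iff (zpow_nonneg zero_le_two _)] at hvol
  exact hvol

lemma idxCube_injective (hn : 0 < n) : Function.Injective (idxCube n) := by
  intro P Q h
  have hk : P.1 = Q.1 := by
    have hle := le_antisymm (zpow_neg_le_of_idxCube_subset hn h.le)
      (zpow_neg_le_of_idxCube_subset hn h.ge)
    simpa using zpow_right_injective₀ two_pos (by norm_num) hle
  have hcorner := mem_dyadicCube_iff.mp (h.le (corner_mem_dyadicCube P.1 P.2))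
  refine Prod.ext hk (funext fun i => ?_)
  rw [← hcorner i, ← hk, floor_zpow_mul_zpow_neg_mul]

lemma carlesonBox_subset (hn : 0 < n) {P Q : CubeIdx n} (h : idxCube n P ⊆ idxCube n Q) :
    carlesonBox n P.1 P.2 ⊆ carlesonBox n Q.1 Q.2 :=
  Set.prod_mono h (Set.Ioc_subset_Ioc_right (zpow_neg_le_of_idxCube_subset hn h))

end DyadicGeometry

section StoppingTree

variable {n : ℕ} {σ : Measure (Fin n → ℝ)} {μ f : (Fin n → ℝ) × ℝ → ℝ≥0∞} {p' : ℝ} {A : ℝ≥0∞}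

lemma fStop_iff_reflTransGen {Q₀ F : CubeIdx n} :
    fStop n σ μ f p' A Q₀ F ↔ Relation.ReflTransGen (fStopChild n σ μ f p' A) Q₀ F := by
  constructor
  · intro h
    induction h with
    | top => exact .refl
    | child _ hchild ih => exact ih.tail hchild
  · intro h
    induction h with
    | refl => exact .top
    | tail _ hchild ih => exact .child ih hchild

lemma idxCube_subset_of_fStop {Q₀ F : CubeIdx n} (h : fStop n σ μ f p' A Q₀ F) :
    idxCube n F ⊆ idxCube n Q₀ := by
  induction h with
  | top => exact subset_rfl
  | child _ hchild ih => exact hchild.1.trans ih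

lemma fStopChild.ne (hA : 1 ≤ A) {F Q : CubeIdx n} (h : fStopChild n σ μ f p' A F Q) :
    Q ≠ F := by
  rintro rfl
  exact h.2.1.not_ge (le_mul_of_one_le_left zero_le hA)

lemma fStopChild.eq_of_subset (hn : 0 < n) {F Q Q' : CubeIdx n}
    (hQ : fStopChild n σ μ f p' A F Q) (hQ' : fStopChild n σ μ f p' A F Q')
    (h : idxCube n Q ⊆ idxCube n Q') : Q = Q' := by
  by_contra hne
  have hss : idxCube n Q ⊂ idxCube n Q' :=
    ⟨h, fun h' => hne (idxCube_injective hn (h.antisymm h'))⟩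
  exact hQ.2.2 Q' hss hQ'.1 hQ'.2.1

lemma pairwise_disjoint_fStopChild (hn : 0 < n) (F : CubeIdx n) :
    Pairwise (Function.onFun Disjoint
      fun Q : {Q | fStopChild n σ μ f p' A F Q} => idxCube n Q.1) := by
  intro Q Q' hne
  by_contra hmeet
  rcases idxCube_subset_or_subset (Set.not_disjoint_iff_nonempty_inter.mp hmeet) with h | h
  · exact hne (Subtype.ext (Q.2.eq_of_subset hn Q'.2 h))
  · exact hne (Subtype.ext (Q'.2.eq_of_subset hn Q.2 h).symm)

lemma fStop.eq_of_ssubset_fStopChild {H G F : CubeIdx n} (hG : fStopChild n σ μ f p' A H G)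
    (hF : fStop n σ μ f p' A H F) (h : idxCube n G ⊂ idxCube n F) : F = H := by
  induction hF with
  | top => rfl
  | @child F₁ F hF₁ hchild ih =>
    obtain rfl := ih (h.trans_subset hchild.1)
    exact absurd hchild.2.1 (hG.2.2 F h hchild.1)

lemma fStop_of_fStop_of_subset_fStopChild (hn : 0 < n) (hA : 1 ≤ A) {H G F : CubeIdx n}
    (hG : fStopChild n σ μ f p' A H G) (hF : fStop n σ μ f p' A H F)
    (h : idxCube n F ⊆ idxCube n G) : fStop n σ μ f p' A G F := by
  induction hF with
  | top => exact absurd (idxCube_injective hn (hG.1.antisymm h)) (hG.ne hA)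
  | @child F₁ F hF₁ hchild ih =>
    obtain ⟨x, hx⟩ := idxCube_nonempty F
    rcases idxCube_subset_or_subset ⟨x, hchild.1 hx, h hx⟩ with hF₁G | hGF₁
    · exact .child (ih hF₁G) hchild
    · by_cases hF₁G : idxCube n F₁ ⊆ idxCube n G
      · exact .child (ih hF₁G) hchild
      · -- `F₁` strictly contains the stopping child `G` of `H`, so `F₁ = H` and `F = G`.
        obtain rfl := hF₁.eq_of_ssubset_fStopChild hG ⟨hGF₁, hF₁G⟩
        obtain rfl := hchild.eq_of_subset hn hG h
        exact .top

lemma fStop_of_subset (hn : 0 < n) (hA : 1 ≤ A) {Q₀ F F' : CubeIdx n}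
    (hF : fStop n σ μ f p' A Q₀ F) (hF' : fStop n σ μ f p' A Q₀ F')
    (h : idxCube n F' ⊆ idxCube n F) : fStop n σ μ f p' A F F' := by
  induction hF with
  | top => exact hF'
  | child _ hchild ih =>
    exact fStop_of_fStop_of_subset_fStopChild hn hA hchild (ih (h.trans hchild.1)) h

end StoppingTree

section Descendants

variable {α : Type*} (R : α → α → Prop)

def descendantsAt (a : α) : ℕ → Set α
  | 0 => {a}
  | m + 1 => ⋃ b ∈ descendantsAt a m, {c | R b c}

variable {R}

lemma reflTransGen_of_mem_descendantsAt {a c : α} :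
    ∀ {m : ℕ}, c ∈ descendantsAt R a m → Relation.ReflTransGen R a c
  | 0, h => by
    rw [h]
  | m + 1, h => by
    obtain ⟨b, hb, hbc⟩ := Set.mem_iUnion₂.mp h
    exact (reflTransGen_of_mem_descendantsAt hb).tail hbc

lemma exists_mem_descendantsAt {a c : α} (h : Relation.ReflTransGen R a c) :
    ∃ m, c ∈ descendantsAt R a m := by
  induction h with
  | refl => exact ⟨0, rfl⟩
  | tail _ hbc ih =>
    obtain ⟨m, hm⟩ := ih
    exact ⟨m + 1, Set.mem_iUnion₂.mpr ⟨_, hm, hbc⟩⟩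

lemma tsum_descendantsAt_le {w : α → ℝ≥0∞} {r : ℝ≥0∞} {a : α}
    (hstep : ∀ b, Relation.ReflTransGen R a b → ∑' c : {c | R b c}, w c ≤ r * w b) :
    ∀ m : ℕ, ∑' c : descendantsAt R a m, w c ≤ r ^ m * w a
  | 0 => by simp [descendantsAt]
  | m + 1 =>
    calc ∑' c : descendantsAt R a (m + 1), w c
        ≤ ∑' b : descendantsAt R a m, ∑' c : {c | R b c}, w c :=
          ENNReal.tsum_biUnion_le_tsum w _ _
      _ ≤ ∑' b : descendantsAt R a m, r * w b :=
          ENNReal.tsum_le_tsum fun b => hstep b (reflTransGen_of_mem_descendantsAt b.2)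
      _ ≤ r * (r ^ m * w a) := by
          rw [ENNReal.tsum_mul_left]
          gcongr
          exact tsum_descendantsAt_le hstep m
      _ = r ^ (m + 1) * w a := by ring

lemma tsum_reflTransGen_le {w : α → ℝ≥0∞} {r : ℝ≥0∞} {a : α}
    (hstep : ∀ b, Relation.ReflTransGen R a b → ∑' c : {c | R b c}, w c ≤ r * w b) :
    ∑' c : {c | Relation.ReflTransGen R a c}, w c ≤ (1 - r)⁻¹ * w a :=
  calc ∑' c : {c | Relation.ReflTransGen R a c}, w c
      ≤ ∑' c : ⋃ m, descendantsAt R a m, w c :=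
        ENNReal.tsum_mono_subtype w fun _ hc => Set.mem_iUnion.mpr (exists_mem_descendantsAt hc)
    _ ≤ ∑' m, ∑' c : descendantsAt R a m, w c := ENNReal.tsum_iUnion_le_tsum w _
    _ ≤ ∑' m, r ^ m * w a := ENNReal.tsum_le_tsum (tsum_descendantsAt_le hstep)
    _ = (1 - r)⁻¹ * w a := by rw [ENNReal.tsum_mul_right, ENNReal.tsum_geometric]

end Descendants

lemma ENNReal.tsum_rpow_mul_rpow_le {ι : Type*} (f g : ι → ℝ≥0∞) {a b : ℝ} (ha : 0 ≤ a)
    (hb : 0 ≤ b) (hab : a + b = 1) :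
    ∑' i, f i ^ a * g i ^ b ≤ (∑' i, f i) ^ a * (∑' i, g i) ^ b := by
  let _ : MeasurableSpace ι := ⊤
  simpa only [lintegral_count] using
    ENNReal.lintegral_mul_norm_pow_le (μ := (Measure.count : Measure ι))
    measurable_from_top.aemeasurable measurable_from_top.aemeasurable ha hb hab

section VerticalNorm

variable {n : ℕ}

lemma measurable_vertL2 {g : (Fin n → ℝ) × ℝ → ℝ≥0∞} (hg : Measurable g) :
    Measurable (vertL2 n g) :=
  (Measurable.tsum fun _ =>
    (hg.comp (measurable_id.prodMk measurable_const)).pow_const 2).pow_const _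

lemma vertL2_mul_left (c : (Fin n → ℝ) → ℝ≥0∞) (g : (Fin n → ℝ) × ℝ → ℝ≥0∞)
    (x : Fin n → ℝ) : vertL2 n (fun z => c z.1 * g z) x = c x * vertL2 n g x := by
  simp only [vertL2, mul_pow, ENNReal.tsum_mul_left]
  rw [ENNReal.mul_rpow_of_nonneg _ _ (by norm_num), ← ENNReal.rpow_natCast,
    ← ENNReal.rpow_mul]
  norm_num

lemma vertL2_sq (g : (Fin n → ℝ) × ℝ → ℝ≥0∞) (x : Fin n → ℝ) :
    vertL2 n g x ^ 2 = ∑' j : ℤ, g (x, (2:ℝ) ^ j) ^ 2 := by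
  rw [vertL2, ← ENNReal.rpow_natCast, ← ENNReal.rpow_mul,
    show (1 / 2 : ℝ) * (2 : ℕ) = 1 by norm_num, ENNReal.rpow_one]
  exact (Equiv.neg ℤ).tsum_eq fun j => g (x, (2:ℝ) ^ j) ^ 2

lemma vertL2_mono {g h : (Fin n → ℝ) × ℝ → ℝ≥0∞} (hgh : g ≤ h) (x : Fin n → ℝ) :
    vertL2 n g x ≤ vertL2 n h x := by
  unfold vertL2
  gcongr with k
  exact hgh _

lemma mixedNorm_rpow (σ : Measure (Fin n → ℝ)) {q : ℝ} (hq : 0 < q)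
    (g : (Fin n → ℝ) × ℝ → ℝ≥0∞) :
    mixedNorm n σ q g ^ q = ∫⁻ x, vertL2 n g x ^ q ∂σ := by
  rw [mixedNorm, ← ENNReal.rpow_mul, one_div, inv_mul_cancel₀ hq.ne', ENNReal.rpow_one]

end VerticalNorm

section CarlesonBoxes

variable {n : ℕ} {σ : Measure (Fin n → ℝ)} {μ : (Fin n → ℝ) × ℝ → ℝ≥0∞}

lemma measurable_boxFn (hμ : Measurable μ) (k : ℤ) (m : Fin n → ℤ) :
    Measurable (boxFn n μ k m) :=
  hμ.indicator ((measurableSet_dyadicCube k m).prod measurableSet_Ioc)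

lemma vertL2_boxFn_mono (hn : 0 < n) {P Q : CubeIdx n} (h : idxCube n P ⊆ idxCube n Q)
    (x : Fin n → ℝ) : vertL2 n (boxFn n μ P.1 P.2) x ≤ vertL2 n (boxFn n μ Q.1 Q.2) x :=
  vertL2_mono (Set.indicator_le_indicator_of_subset (carlesonBox_subset hn h)
    fun _ => zero_le) x

lemma vertL2_boxFn_of_notMem {Q : CubeIdx n} {x : Fin n → ℝ} (hx : x ∉ idxCube n Q) :
    vertL2 n (boxFn n μ Q.1 Q.2) x = 0 := by
  have hzero (t : ℝ) : boxFn n μ Q.1 Q.2 (x, t) = 0 :=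
    Set.indicator_of_notMem (fun h => hx h.1) _
  simp [vertL2, hzero]

lemma tsum_boxInt_le (hn : 0 < n) (g : (Fin n → ℝ) × ℝ → ℝ≥0∞) {ι : Type*} [Countable ι]
    (Q : ι → CubeIdx n) {F : CubeIdx n} (hsub : ∀ i, idxCube n (Q i) ⊆ idxCube n F)
    (hdisj : Pairwise (Function.onFun Disjoint fun i => idxCube n (Q i))) :
    ∑' i, boxInt n σ μ g (Q i).1 (Q i).2 ≤ boxInt n σ μ g F.1 F.2 := by
  unfold boxInt
  rw [ENNReal.tsum_comm]
  refine ENNReal.tsum_le_tsum fun j => ?_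
  split_ifs with hj
  · calc ∑' i, (if (2:ℝ) ^ j ≤ (2:ℝ) ^ (-(Q i).1) then
            ∫⁻ x in idxCube n (Q i), g (x, (2:ℝ) ^ j) * μ (x, (2:ℝ) ^ j) ∂σ else 0)
        ≤ ∑' i, ∫⁻ x in idxCube n (Q i), g (x, (2:ℝ) ^ j) * μ (x, (2:ℝ) ^ j) ∂σ :=
          ENNReal.tsum_le_tsum fun i => by split_ifs <;> simp
      _ = ∫⁻ x in ⋃ i, idxCube n (Q i), g (x, (2:ℝ) ^ j) * μ (x, (2:ℝ) ^ j) ∂σ :=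
          (lintegral_iUnion (fun i => measurableSet_dyadicCube _ _) hdisj _).symm
      _ ≤ _ := lintegral_mono_set (Set.iUnion_subset hsub)
  · refine le_of_eq (ENNReal.tsum_eq_zero.mpr fun i => if_neg fun hj' => hj ?_)
    exact hj'.trans (zpow_neg_le_of_idxCube_subset hn (hsub i))

lemma boxInt_mono (hn : 0 < n) (g : (Fin n → ℝ) × ℝ → ℝ≥0∞) {P F : CubeIdx n}
    (h : idxCube n P ⊆ idxCube n F) : boxInt n σ μ g P.1 P.2 ≤ boxInt n σ μ g F.1 F.2 := by
  simpa using tsum_boxInt_le (σ := σ) (μ := μ) hn g (fun _ : Unit => P) (fun _ => h)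
    Subsingleton.pairwise

end CarlesonBoxes

section TestFunctions

variable {n : ℕ} {σ : Measure (Fin n → ℝ)} {μ : (Fin n → ℝ) × ℝ → ℝ≥0∞} {p' : ℝ}

def testWeight (n : ℕ) (μ : (Fin n → ℝ) × ℝ → ℝ≥0∞) (p' : ℝ) (F : CubeIdx n)
    (x : Fin n → ℝ) : ℝ≥0∞ :=
  if vertL2 n (boxFn n μ F.1 F.2) x = 0 then 0 else vertL2 n (boxFn n μ F.1 F.2) x ^ (p' - 2)

def boxMass (n : ℕ) (σ : Measure (Fin n → ℝ)) (μ : (Fin n → ℝ) × ℝ → ℝ≥0∞) (p' : ℝ)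
    (Q : CubeIdx n) : ℝ≥0∞ :=
  ∫⁻ x, vertL2 n (boxFn n μ Q.1 Q.2) x ^ p' ∂σ

lemma ae_vertL2_boxFn_ne_top (hμ : Measurable μ) (hp' : 0 < p') {Q : CubeIdx n}
    (hQ : boxMass n σ μ p' Q ≠ ∞) : ∀ᵐ x ∂σ, vertL2 n (boxFn n μ Q.1 Q.2) x ≠ ∞ := by
  filter_upwards [ae_lt_top ((measurable_vertL2 (measurable_boxFn hμ Q.1 Q.2)).pow_const p') hQ]
    with x hx
  exact fun htop => by simp [htop, ENNReal.top_rpow_of_pos hp'] at hx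

lemma boxMass_eq_setLIntegral (hp' : 0 < p') (Q : CubeIdx n) :
    boxMass n σ μ p' Q = ∫⁻ x in idxCube n Q, vertL2 n (boxFn n μ Q.1 Q.2) x ^ p' ∂σ := by
  refine (setLIntegral_eq_of_support_subset fun x hx => ?_).symm
  by_contra hxQ
  simp [vertL2_boxFn_of_notMem hxQ, ENNReal.zero_rpow_of_pos hp'] at hx

lemma testFn_apply (F : CubeIdx n) (z : (Fin n → ℝ) × ℝ) :
    testFn n p' μ F.1 F.2 z = testWeight n μ p' F z.1 * boxFn n μ F.1 F.2 z := by
  unfold testFn testWeight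
  split_ifs <;> simp

lemma measurable_testWeight (hμ : Measurable μ) (F : CubeIdx n) :
    Measurable (testWeight n μ p' F) := by
  have hV := measurable_vertL2 (measurable_boxFn hμ F.1 F.2)
  exact Measurable.ite (hV (measurableSet_singleton 0)) measurable_const (hV.pow_const _)

lemma testWeight_mul_rpow {p : ℝ} (hp : 0 < p) (hp' : 0 < p') (hpp' : (p' - 1) * p = p')
    {F : CubeIdx n} {x : Fin n → ℝ} (hx : vertL2 n (boxFn n μ F.1 F.2) x ≠ ∞) :
    (testWeight n μ p' F x * vertL2 n (boxFn n μ F.1 F.2) x) ^ p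
      = vertL2 n (boxFn n μ F.1 F.2) x ^ p' := by
  unfold testWeight
  split_ifs with h0
  · rw [h0, zero_mul, ENNReal.zero_rpow_of_pos hp, ENNReal.zero_rpow_of_pos hp']
  · rw [ENNReal.mul_rpow_of_nonneg _ _ hp.le, ← ENNReal.rpow_mul,
      ← ENNReal.rpow_add _ _ h0 hx]
    congr 1
    linarith

lemma testWeight_mul_sq (hp' : 0 < p') {F : CubeIdx n} {x : Fin n → ℝ}
    (hx : vertL2 n (boxFn n μ F.1 F.2) x ≠ ∞) :
    testWeight n μ p' F x * vertL2 n (boxFn n μ F.1 F.2) x ^ 2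
      = vertL2 n (boxFn n μ F.1 F.2) x ^ p' := by
  unfold testWeight
  split_ifs with h0
  · rw [h0, zero_mul, ENNReal.zero_rpow_of_pos hp']
  · rw [← ENNReal.rpow_natCast, ← ENNReal.rpow_add _ _ h0 hx]
    norm_num

lemma rpow_eq_testWeight_mul_sq_rpow_mul (hn : 0 < n) (hp' : 0 < p') {Q F : CubeIdx n}
    (hQF : idxCube n Q ⊆ idxCube n F) {x : Fin n → ℝ}
    (hx : vertL2 n (boxFn n μ F.1 F.2) x ≠ ∞) :
    vertL2 n (boxFn n μ Q.1 Q.2) x ^ p'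
      = (testWeight n μ p' F x * vertL2 n (boxFn n μ Q.1 Q.2) x ^ 2) ^ (p' / 2)
        * (vertL2 n (boxFn n μ F.1 F.2) x ^ p') ^ (1 - p' / 2) := by
  unfold testWeight
  set u := vertL2 n (boxFn n μ Q.1 Q.2) x
  set v := vertL2 n (boxFn n μ F.1 F.2) x
  split_ifs with h0
  · have hu : u = 0 := le_zero_iff.mp (h0 ▸ vertL2_boxFn_mono hn hQF x)
    rw [hu, zero_mul, ENNReal.zero_rpow_of_pos hp', ENNReal.zero_rpow_of_pos (by positivity),
      zero_mul]
  · rw [ENNReal.mul_rpow_of_nonneg _ _ (by positivity), ← ENNReal.rpow_natCast u,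
      ← ENNReal.rpow_mul, ← ENNReal.rpow_mul, ← ENNReal.rpow_mul, mul_right_comm,
      ← ENNReal.rpow_add _ _ h0 hx]
    rw [show (p' - 2) * (p' / 2) + p' * (1 - p' / 2) = 0 by ring,
      show ((2 : ℕ) : ℝ) * (p' / 2) = p' by push_cast; ring, ENNReal.rpow_zero, one_mul]

lemma boxMass_eq_mixedNorm_rpow (hp' : 0 < p') (Q : CubeIdx n) :
    boxMass n σ μ p' Q = mixedNorm n σ p' (boxFn n μ Q.1 Q.2) ^ p' :=
  (mixedNorm_rpow σ hp' _).symm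

lemma mixedNorm_testFn_rpow (hμ : Measurable μ) {p : ℝ} (hp : 0 < p) (hp' : 0 < p')
    (hpp' : (p' - 1) * p = p') {Q : CubeIdx n} (hQ : boxMass n σ μ p' Q ≠ ∞) :
    mixedNorm n σ p (testFn n p' μ Q.1 Q.2) ^ p = boxMass n σ μ p' Q := by
  rw [mixedNorm_rpow σ hp, boxMass]
  refine lintegral_congr_ae ?_
  filter_upwards [ae_vertL2_boxFn_ne_top hμ hp' hQ] with x hx
  rw [funext (testFn_apply Q), vertL2_mul_left, testWeight_mul_rpow hp hp' hpp' hx]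

end TestFunctions

section LevelBound

variable {n : ℕ} {σ : Measure (Fin n → ℝ)} {μ f : (Fin n → ℝ) × ℝ → ℝ≥0∞} {p' : ℝ}
  {A : ℝ≥0∞}

lemma boxInt_testFn_eq (hn : 0 < n) (hμ : Measurable μ) {Q F : CubeIdx n}
    (hQF : idxCube n Q ⊆ idxCube n F) :
    boxInt n σ μ (testFn n p' μ F.1 F.2) Q.1 Q.2
      = ∫⁻ x in idxCube n Q, testWeight n μ p' F x * vertL2 n (boxFn n μ Q.1 Q.2) x ^ 2 ∂σ := by
  have hterm (j : ℤ) :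
      (if (2:ℝ) ^ j ≤ (2:ℝ) ^ (-Q.1) then ∫⁻ x in dyadicCube n Q.1 Q.2,
          testFn n p' μ F.1 F.2 (x, (2:ℝ) ^ j) * μ (x, (2:ℝ) ^ j) ∂σ else 0)
        = ∫⁻ x in idxCube n Q, testWeight n μ p' F x * boxFn n μ Q.1 Q.2 (x, (2:ℝ) ^ j) ^ 2 ∂σ := by
    split_ifs with hj
    · refine setLIntegral_congr_fun (measurableSet_dyadicCube _ _) fun x hx => ?_
      have hQ : (x, (2:ℝ) ^ j) ∈ carlesonBox n Q.1 Q.2 := ⟨hx, zpow_pos two_pos j, hj⟩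
      rw [testFn_apply, boxFn, boxFn, Set.indicator_of_mem hQ,
        Set.indicator_of_mem (carlesonBox_subset hn hQF hQ), mul_assoc, sq]
    · have hzero (x : Fin n → ℝ) : boxFn n μ Q.1 Q.2 (x, (2:ℝ) ^ j) = 0 :=
        Set.indicator_of_notMem (fun h => hj h.2.2) _
      simp [hzero]
  have hmeas (j : ℤ) : AEMeasurable (fun x =>
      testWeight n μ p' F x * boxFn n μ Q.1 Q.2 (x, (2:ℝ) ^ j) ^ 2) (σ.restrict (idxCube n Q)) :=
    ((measurable_testWeight hμ F).mul (((measurable_boxFn hμ Q.1 Q.2).comp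
      (measurable_id.prodMk measurable_const)).pow_const 2)).aemeasurable
  rw [boxInt, tsum_congr hterm, ← lintegral_tsum hmeas]
  simp_rw [ENNReal.tsum_mul_left, vertL2_sq]

lemma boxInt_testFn_self (hn : 0 < n) (hμ : Measurable μ) (hp' : 0 < p') {F : CubeIdx n}
    (hF : boxMass n σ μ p' F ≠ ∞) :
    boxInt n σ μ (testFn n p' μ F.1 F.2) F.1 F.2 = boxMass n σ μ p' F := by
  rw [boxInt_testFn_eq hn hμ subset_rfl, boxMass_eq_setLIntegral hp']
  refine setLIntegral_congr_fun_ae (measurableSet_dyadicCube _ _) ?_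
  filter_upwards [ae_vertL2_boxFn_ne_top hμ hp' hF] with x hx _
  exact testWeight_mul_sq hp' hx

lemma boxMass_le_boxInt_testFn_rpow_mul (hn : 0 < n) (hμ : Measurable μ) (hp' : 0 < p')
    (hp'2 : p' ≤ 2) {Q F : CubeIdx n} (hQF : idxCube n Q ⊆ idxCube n F)
    (hF : boxMass n σ μ p' F ≠ ∞) :
    boxMass n σ μ p' Q ≤ boxInt n σ μ (testFn n p' μ F.1 F.2) Q.1 Q.2 ^ (p' / 2)
      * (∫⁻ x in idxCube n Q, vertL2 n (boxFn n μ F.1 F.2) x ^ p' ∂σ) ^ (1 - p' / 2) := by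
  have hV := measurable_vertL2 (measurable_boxFn hμ F.1 F.2)
  rw [boxMass_eq_setLIntegral hp', boxInt_testFn_eq hn hμ hQF]
  calc ∫⁻ x in idxCube n Q, vertL2 n (boxFn n μ Q.1 Q.2) x ^ p' ∂σ
      = ∫⁻ x in idxCube n Q,
          (testWeight n μ p' F x * vertL2 n (boxFn n μ Q.1 Q.2) x ^ 2) ^ (p' / 2)
            * (vertL2 n (boxFn n μ F.1 F.2) x ^ p') ^ (1 - p' / 2) ∂σ := by
        refine lintegral_congr_ae (ae_restrict_of_ae ?_)
        filter_upwards [ae_vertL2_boxFn_ne_top hμ hp' hF] with x hx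
        exact rpow_eq_testWeight_mul_sq_rpow_mul hn hp' hQF hx
    _ ≤ _ := ENNReal.lintegral_mul_norm_pow_le
        ((measurable_testWeight hμ F).mul
          ((measurable_vertL2 (measurable_boxFn hμ Q.1 Q.2)).pow_const 2)).aemeasurable
        (hV.pow_const p').aemeasurable (by positivity) (by linarith) (by ring)

lemma mul_tsum_boxInt_testFn_fStopChild_le (hn : 0 < n) {F : CubeIdx n}
    (hfF : boxInt n σ μ f F.1 F.2 ≠ ∞) :
    A * ∑' Q : {Q | fStopChild n σ μ f p' A F Q},
        boxInt n σ μ (testFn n p' μ F.1 F.2) Q.1.1 Q.1.2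
      ≤ boxInt n σ μ (testFn n p' μ F.1 F.2) F.1 F.2 := by
  have hsum : ∑' Q : {Q | fStopChild n σ μ f p' A F Q}, boxInt n σ μ f Q.1.1 Q.1.2
      ≤ boxInt n σ μ f F.1 F.2 :=
    tsum_boxInt_le hn f (fun Q : {Q | fStopChild n σ μ f p' A F Q} => Q.1) (fun Q => Q.2.1)
      (pairwise_disjoint_fStopChild hn F)
  rcases eq_or_ne (boxInt n σ μ f F.1 F.2) 0 with h0 | h0
  · -- every child would satisfy the stopping inequality `0 < 0`
    have : IsEmpty {Q | fStopChild n σ μ f p' A F Q} := ⟨fun Q => by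
      have hQ := Q.2.2.1
      rw [le_zero_iff.mp ((ENNReal.le_tsum Q).trans (hsum.trans h0.le)), h0] at hQ
      simp at hQ⟩
    simp
  · refine (ENNReal.mul_le_mul_iff_right h0 hfF).mp ?_
    calc boxInt n σ μ f F.1 F.2 * (A * ∑' Q : {Q | fStopChild n σ μ f p' A F Q},
          boxInt n σ μ (testFn n p' μ F.1 F.2) Q.1.1 Q.1.2)
        = ∑' Q : {Q | fStopChild n σ μ f p' A F Q}, A * (boxInt n σ μ f F.1 F.2
            * boxInt n σ μ (testFn n p' μ F.1 F.2) Q.1.1 Q.1.2) := by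
          rw [← ENNReal.tsum_mul_left, ← ENNReal.tsum_mul_left]
          exact tsum_congr fun Q => by ring
      _ ≤ ∑' Q : {Q | fStopChild n σ μ f p' A F Q},
            boxInt n σ μ f Q.1.1 Q.1.2 * boxInt n σ μ (testFn n p' μ F.1 F.2) F.1 F.2 :=
          ENNReal.tsum_le_tsum fun Q => Q.2.2.1.le
      _ ≤ boxInt n σ μ f F.1 F.2 * boxInt n σ μ (testFn n p' μ F.1 F.2) F.1 F.2 := by
          rw [ENNReal.tsum_mul_right]
          gcongr

lemma tsum_setLIntegral_fStopChild_le (hn : 0 < n) (F : CubeIdx n) (g : (Fin n → ℝ) → ℝ≥0∞) :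
    ∑' Q : {Q | fStopChild n σ μ f p' A F Q}, ∫⁻ x in idxCube n Q.1, g x ∂σ
      ≤ ∫⁻ x, g x ∂σ := by
  calc _ = ∫⁻ x in ⋃ Q : {Q | fStopChild n σ μ f p' A F Q}, idxCube n Q.1, g x ∂σ :=
        (lintegral_iUnion (fun _ => measurableSet_dyadicCube _ _)
          (pairwise_disjoint_fStopChild hn F) g).symm
    _ ≤ _ := setLIntegral_le_lintegral _ _

lemma rpow_mul_tsum_boxMass_fStopChild_le (hn : 0 < n) (hμ : Measurable μ) (hp' : 0 < p')
    (hp'2 : p' ≤ 2) {F : CubeIdx n} (hF : boxMass n σ μ p' F ≠ ∞)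
    (hfF : boxInt n σ μ f F.1 F.2 ≠ ∞) :
    A ^ (p' / 2) * ∑' Q : {Q | fStopChild n σ μ f p' A F Q}, boxMass n σ μ p' Q
      ≤ boxMass n σ μ p' F := by
  have hθ : 0 ≤ p' / 2 := by positivity
  have hθ' : 0 ≤ 1 - p' / 2 := by linarith
  set θ := p' / 2
  set B := fun Q : CubeIdx n => boxInt n σ μ (testFn n p' μ F.1 F.2) Q.1 Q.2
  set D := fun Q : CubeIdx n => ∫⁻ x in idxCube n Q, vertL2 n (boxFn n μ F.1 F.2) x ^ p' ∂σ
  calc A ^ θ * ∑' Q : {Q | fStopChild n σ μ f p' A F Q}, boxMass n σ μ p' Q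
      ≤ A ^ θ * ∑' Q : {Q | fStopChild n σ μ f p' A F Q}, B Q ^ θ * D Q ^ (1 - θ) := by
        gcongr with Q
        exact boxMass_le_boxInt_testFn_rpow_mul hn hμ hp' hp'2 Q.2.1 hF
    _ ≤ A ^ θ * ((∑' Q : {Q | fStopChild n σ μ f p' A F Q}, B Q) ^ θ
          * (∑' Q : {Q | fStopChild n σ μ f p' A F Q}, D Q) ^ (1 - θ)) := by
        gcongr
        exact ENNReal.tsum_rpow_mul_rpow_le _ _ hθ hθ' (by ring)
    _ = (A * ∑' Q : {Q | fStopChild n σ μ f p' A F Q}, B Q) ^ θ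
          * (∑' Q : {Q | fStopChild n σ μ f p' A F Q}, D Q) ^ (1 - θ) := by
        rw [ENNReal.mul_rpow_of_nonneg _ _ hθ, mul_assoc]
    _ ≤ boxMass n σ μ p' F ^ θ * boxMass n σ μ p' F ^ (1 - θ) := by
        gcongr
        · exact (mul_tsum_boxInt_testFn_fStopChild_le hn hfF).trans
            (boxInt_testFn_self hn hμ hp' hF).le
        · exact tsum_setLIntegral_fStopChild_le hn F _
    _ = boxMass n σ μ p' F := by
        rw [← ENNReal.rpow_add_of_nonneg _ _ hθ hθ', add_sub_cancel, ENNReal.rpow_one]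

end LevelBound

lemma tsum_boxMass_fStop_subset_le {n : ℕ} {σ : Measure (Fin n → ℝ)}
    {μ f : (Fin n → ℝ) × ℝ → ℝ≥0∞} {p' : ℝ} (hn : 0 < n) (hμ : Measurable μ) (hp' : 0 < p')
    (hp'2 : p' ≤ 2) (hfin : ∀ Q, boxMass n σ μ p' Q ≠ ∞) {Q₀ F : CubeIdx n}
    (hffin : boxInt n σ μ f Q₀.1 Q₀.2 ≠ ∞)
    (hF : fStop n σ μ f p' ((4 : ℝ≥0∞) ^ (2 / p')) Q₀ F) :
    ∑' F' : {F' | fStop n σ μ f p' ((4 : ℝ≥0∞) ^ (2 / p')) Q₀ F' ∧ idxCube n F' ⊆ idxCube n F},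
        boxMass n σ μ p' F'
      ≤ 2 * boxMass n σ μ p' F := by
  set A : ℝ≥0∞ := 4 ^ (2 / p')
  have hA : 1 ≤ A := ENNReal.one_le_rpow (by norm_num) (by positivity)
  have hAθ : A ^ (p' / 2) = 4 := by
    rw [← ENNReal.rpow_mul, div_mul_div_cancel₀' two_ne_zero, div_self hp'.ne', ENNReal.rpow_one]
  have hstep (G : CubeIdx n) (hG : Relation.ReflTransGen (fStopChild n σ μ f p' A) F G) :
      ∑' Q : {Q | fStopChild n σ μ f p' A G Q}, boxMass n σ μ p' Q ≤ 4⁻¹ * boxMass n σ μ p' G := by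
    have hG₀ : fStop n σ μ f p' A Q₀ G :=
      fStop_iff_reflTransGen.mpr ((fStop_iff_reflTransGen.mp hF).trans hG)
    have hfG := ne_top_of_le_ne_top hffin (boxInt_mono hn f (idxCube_subset_of_fStop hG₀))
    have hlevel := rpow_mul_tsum_boxMass_fStopChild_le (A := A) hn hμ hp' hp'2 (hfin G) hfG
    rw [hAθ] at hlevel
    calc _ = 4⁻¹ * (4 * ∑' Q : {Q | fStopChild n σ μ f p' A G Q}, boxMass n σ μ p' Q) := by
          rw [← mul_assoc, ENNReal.inv_mul_cancel (by norm_num) (by norm_num), one_mul]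
      _ ≤ _ := by gcongr
  calc _ ≤ ∑' F' : {F' | Relation.ReflTransGen (fStopChild n σ μ f p' A) F F'},
          boxMass n σ μ p' F' :=
        ENNReal.tsum_mono_subtype _ fun F' hF' =>
          fStop_iff_reflTransGen.mp (fStop_of_subset hn hA hF hF'.1 hF'.2)
    _ ≤ (1 - 4⁻¹)⁻¹ * boxMass n σ μ p' F := tsum_reflTransGen_le hstep
    _ ≤ 2 * boxMass n σ μ p' F := by
        gcongr
        rw [ENNReal.inv_le_iff_inv_le]
        refine ENNReal.le_sub_of_add_le_left (by simp) ?_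
        rw [← ENNReal.inv_two_add_inv_two]
        gcongr
        norm_num

theorem statement9_general (p : ℝ) (hp : 2 ≤ p) (n : ℕ) (hn : 0 < n)
    (σ : Measure (Fin n → ℝ))
    (μ : (Fin n → ℝ) × ℝ → ℝ≥0∞) (hμ : Measurable μ)
    (hfin : ∀ Q : CubeIdx n, mixedNorm n σ (p/(p-1)) (boxFn n μ Q.1 Q.2) < ∞)
    (Q₀ : CubeIdx n) (f : (Fin n → ℝ) × ℝ → ℝ≥0∞)
    (hffin : boxInt n σ μ f Q₀.1 Q₀.2 < ∞) :
    ∀ F : CubeIdx n, fStop n σ μ f (p/(p-1)) ((4 : ℝ≥0∞) ^ (2/(p/(p-1)))) Q₀ F →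
      (∑' F' : {F' : CubeIdx n //
          fStop n σ μ f (p/(p-1)) ((4 : ℝ≥0∞) ^ (2/(p/(p-1)))) Q₀ F' ∧
          idxCube n F' ⊆ idxCube n F},
        mixedNorm n σ p (testFn n (p/(p-1)) μ F'.1.1 F'.1.2) ^ p)
      ≤ 2 * mixedNorm n σ p (testFn n (p/(p-1)) μ F.1 F.2) ^ p := by
  intro F hF
  have hp1 : 0 < p - 1 := by linarith
  have hp' : 0 < p / (p - 1) := by positivity
  have hp'2 : p / (p - 1) ≤ 2 := by rw [div_le_iff₀ hp1]; linarith
  have hpp' : (p / (p - 1) - 1) * p = p / (p - 1) := by field_simp; ring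
  have hmass (Q : CubeIdx n) : boxMass n σ μ (p / (p - 1)) Q ≠ ∞ := by
    rw [boxMass_eq_mixedNorm_rpow hp']
    exact ENNReal.rpow_ne_top_of_nonneg hp'.le (hfin Q).ne
  simp_rw [mixedNorm_testFn_rpow hμ (by linarith) hp' hpp' (hmass _)]
  exact tsum_boxMass_fStop_subset_le hn hμ hp' hp'2 hmass hffin.ne hF

/-- Estimate (2.9): for the stopping family `𝓕` of `f` with top cube `Q₀` and parameter
`A = 4^{2/p'}`, one has `∑_{F' ∈ 𝓕, F' ⊆ F} ‖φ_{F'}‖_{L^p(σ;ℓ²)}^p ≤ 2 ‖φ_F‖_{L^p(σ;ℓ²)}^p`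
for every `F ∈ 𝓕`. -/
theorem statement9 (p : ℝ) (hp : 2 ≤ p) (n : ℕ) (hn : 0 < n)
    (σ : Measure (Fin n → ℝ)) [IsLocallyFiniteMeasure σ]
    (μ : (Fin n → ℝ) × ℝ → ℝ≥0∞) (hμ : Measurable μ)
    (hfin : ∀ Q : CubeIdx n, mixedNorm n σ (p/(p-1)) (boxFn n μ Q.1 Q.2) < ∞)
    (Q₀ : CubeIdx n) (f : (Fin n → ℝ) × ℝ → ℝ≥0∞) (hf : Measurable f)
    (hffin : boxInt n σ μ f Q₀.1 Q₀.2 < ∞) :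
    ∀ F : CubeIdx n, fStop n σ μ f (p/(p-1)) ((4 : ℝ≥0∞) ^ (2/(p/(p-1)))) Q₀ F →
      (∑' F' : {F' : CubeIdx n //
          fStop n σ μ f (p/(p-1)) ((4 : ℝ≥0∞) ^ (2/(p/(p-1)))) Q₀ F' ∧
          idxCube n F' ⊆ idxCube n F},
        mixedNorm n σ p (testFn n (p/(p-1)) μ F'.1.1 F'.1.2) ^ p)
      ≤ 2 * mixedNorm n σ p (testFn n (p/(p-1)) μ F.1 F.2) ^ p :=
  statement9_general p hp n hn σ μ hμ hfin Q₀ f hffin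

end
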